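/- arXiv:0802.1925 — 4 statements merged into one kernel-verified Lean document; each statement's English description precedes it below -/
import Mathlib

section
/- If Ψ : ℕ → ℝ₊ is monotonically decreasing and ∑_{h=1}^∞ Ψ(h) diverges, then the function Ψ̃ defined by Ψ̃(x) = x^{-n/(n+1)} Ψ(x^{1/(n+1)}) satisfies ∑_{h=1}^∞ Ψ̃(h) = ∞, for any fixed positive integer n. -/
/-!
Group the positive integers into the blocks `[k^(n+1), (k+1)^(n+1))`. Since `Ψ̃ = rootRescale Ψ n`
is antitone on them, every term of a block is at least `Ψ̃((k+1)^(n+1)) = Ψ(k+1) / (k+1)^n`, and the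
block has at least `(k+1)^n` elements; so the block sums of `Ψ̃` dominate `Ψ(k+1)`. This is one half
of Schlömilch's condensation test for `u k = (k+1)^(n+1)`.
-/

open Finset

theorem Summable.schlomilch_succ {f : ℕ → ℝ} {u : ℕ → ℕ} (hf : Summable f)
    (h_nonneg : ∀ n, 0 ≤ f n) (h_anti : ∀ ⦃m n⦄, 1 < m → m ≤ n → f n ≤ f m)
    (h_pos : ∀ n, 0 < u n) (hu : Monotone u) :
    Summable fun k => (u (k + 1) - u k) • f (u (k + 1)) :=
  summable_of_sum_range_le (fun _ => nsmul_nonneg (h_nonneg _) _) fun N =>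
    (sum_schlomilch_le' h_anti h_pos hu N).trans (hf.sum_le_tsum _ fun k _ => h_nonneg k)

theorem pow_add_pow_succ_le_pow_succ (k n : ℕ) : k ^ (n + 1) + (k + 1) ^ n ≤ (k + 1) ^ (n + 1) :=
  calc k ^ (n + 1) + (k + 1) ^ n ≤ k * (k + 1) ^ n + (k + 1) ^ n := by
        rw [pow_succ']; gcongr; omega
    _ = (k + 1) ^ (n + 1) := by ring

noncomputable def rootRescale (Ψ : ℕ → ℝ) (n h : ℕ) : ℝ :=
  (h : ℝ) ^ (-(n : ℝ) / (n + 1)) * Ψ ⌈(h : ℝ) ^ ((1 : ℝ) / (n + 1))⌉₊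

section

variable {Ψ : ℕ → ℝ} (n : ℕ)

theorem rootRescale_nonneg (hΨ : ∀ h, 0 ≤ Ψ h) (h : ℕ) : 0 ≤ rootRescale Ψ n h :=
  mul_nonneg (Real.rpow_nonneg h.cast_nonneg _) (hΨ _)

theorem rootRescale_le_of_le (hΨ : ∀ h, 0 ≤ Ψ h) (hΨ' : Antitone Ψ) ⦃a b : ℕ⦄ (ha : 0 < a)
    (hab : a ≤ b) : rootRescale Ψ n b ≤ rootRescale Ψ n a := by
  have ha' : (0 : ℝ) < a := by exact_mod_cast ha
  have hab' : (a : ℝ) ≤ b := by exact_mod_cast hab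
  unfold rootRescale
  gcongr ?_ * ?_
  · exact hΨ _
  · exact Real.rpow_le_rpow_of_nonpos ha' hab' (by rw [neg_div]; exact neg_nonpos.2 (by positivity))
  · exact hΨ' (Nat.ceil_mono (Real.rpow_le_rpow ha'.le hab' (by positivity)))

theorem rootRescale_pow_succ (k : ℕ) : rootRescale Ψ n (k ^ (n + 1)) = Ψ k / (k : ℝ) ^ n := by
  have hk : (0 : ℝ) ≤ k := k.cast_nonneg
  have hroot : ((k : ℝ) ^ (n + 1)) ^ ((1 : ℝ) / (n + 1)) = k := by
    simpa [one_div] using Real.pow_rpow_inv_natCast hk (n.succ_ne_zero)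
  have hweight : ((k : ℝ) ^ (n + 1)) ^ (-(n : ℝ) / (n + 1)) = ((k : ℝ) ^ n)⁻¹ := by
    rw [← Real.rpow_natCast_mul hk, ← Real.rpow_natCast, ← Real.rpow_neg hk]
    congr 1
    field_simp
    push_cast
    ring
  simp only [rootRescale, Nat.cast_pow, hroot, hweight, Nat.ceil_natCast]
  ring

theorem le_nsmul_rootRescale_pow_succ (hΨ : ∀ h, 0 ≤ Ψ h) (k : ℕ) :
    Ψ (k + 1) ≤ ((k + 1) ^ (n + 1) - k ^ (n + 1)) • rootRescale Ψ n ((k + 1) ^ (n + 1)) := by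
  have hblock : ((k + 1 : ℕ) : ℝ) ^ n ≤ ((k + 1) ^ (n + 1) - k ^ (n + 1) : ℕ) := by
    have := pow_add_pow_succ_le_pow_succ k n
    exact_mod_cast (by omega : (k + 1) ^ n ≤ (k + 1) ^ (n + 1) - k ^ (n + 1))
  rw [nsmul_eq_mul, rootRescale_pow_succ, mul_div_assoc', le_div_iff₀ (by positivity), mul_comm]
  gcongr
  exact hΨ _

end

theorem stmt_2_general (Ψ : ℕ → ℝ) (hpos : ∀ h, 0 < Ψ h)
    (hmono : ∀ m n : ℕ, m ≤ n → Ψ n ≤ Ψ m)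
    (n : ℕ)
    (hdiv : ¬ Summable Ψ) :
    ¬ Summable (fun h : ℕ =>
      (h : ℝ) ^ (-(n : ℝ) / (n + 1)) * Ψ ⌈(h : ℝ) ^ ((1 : ℝ) / (n + 1))⌉₊) := by
  intro hs
  have hΨ : ∀ h, 0 ≤ Ψ h := fun h => (hpos h).le
  have hcond := Summable.schlomilch_succ (f := rootRescale Ψ n) (u := fun k => (k + 1) ^ (n + 1))
    hs (rootRescale_nonneg n hΨ)
    (fun _ _ ha hab => rootRescale_le_of_le n hΨ (fun a b hab => hmono a b hab) (by omega) hab)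
    (fun _ => by positivity) (fun _ _ hab => by dsimp only; gcongr)
  exact hdiv <| (summable_nat_add_iff 2).mp <|
    hcond.of_nonneg_of_le (fun _ => hΨ _) fun k => le_nsmul_rootRescale_pow_succ n hΨ (k + 1)

theorem stmt_2 (Ψ : ℕ → ℝ) (hpos : ∀ h, 0 < Ψ h)
    (hmono : ∀ m n : ℕ, m ≤ n → Ψ n ≤ Ψ m)
    (n : ℕ) (hn : 1 ≤ n)
    (hdiv : ¬ Summable Ψ) :
    ¬ Summable (fun h : ℕ =>
      (h : ℝ) ^ (-(n : ℝ) / (n + 1)) * Ψ ⌈(h : ℝ) ^ ((1 : ℝ) / (n + 1))⌉₊) :=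
  stmt_2_general Ψ hpos hmono n hdiv
end

section
/- Let P ∈ ℤ[x] be a nonzero polynomial, ω ∈ ℚ_p, and let α be a root of P (in an algebraic closure of ℚ_p, with the extended p-adic valuation) that is nearest to ω among all roots of P. If P'(α) ≠ 0, then |ω − α|_p ≤ |P(ω)|_p / |P'(α)|_p. -/
open Polynomial

/-
If `f` splits with leading coefficient `c` and `α` is a root, then
`f(x) = c (x - α) ∏ (x - β)` and `f'(α) = c ∏ (α - β)`, both products running over the other
roots `β` (with multiplicity). When `α` is a root nearest to `x`, the ultrametric inequality gives
`‖α - β‖ ≤ max ‖α - x‖ ‖x - β‖ = ‖x - β‖` for each such `β`, so comparing the two products factor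
by factor yields `‖x - α‖ ‖f'(α)‖ ≤ ‖f(x)‖`.
-/

lemma IsUltrametricDist.dist_le_of_dist_le {X : Type*} [PseudoMetricSpace X] [IsUltrametricDist X]
    {x a b : X} (h : dist x a ≤ dist x b) : dist a b ≤ dist x b :=
  (dist_triangle_max a x b).trans (max_le (dist_comm a x ▸ h) le_rfl)

namespace Polynomial

section Field

variable {K : Type*} [Field K] {f : K[X]}

lemma Splits.eval_eq_mul_prod_erase_root [DecidableEq K] (hf : f.Splits) {α : K}
    (hα : α ∈ f.roots) (x : K) :
    f.eval x = f.leadingCoeff * ((x - α) * ((f.roots.erase α).map (x - ·)).prod) := by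
  rw [hf.eval_eq_prod_roots, ← Multiset.cons_erase hα, Multiset.map_cons, Multiset.prod_cons,
    Multiset.erase_cons_head]

lemma Splits.eval_root_derivative_eq_mul_prod [DecidableEq K] (hf : f.Splits) {α : K}
    (hα : α ∈ f.roots) :
    f.derivative.eval α = f.leadingCoeff * ((f.roots.erase α).map (α - ·)).prod := by
  conv_lhs => rw [hf.eq_prod_roots]
  rw [derivative_C_mul, eval_mul, eval_C, eval_multiset_prod_X_sub_C_derivative hα]

end Field

lemma Splits.norm_sub_root_mul_norm_eval_derivative_le {K : Type*} [NormedField K]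
    [IsUltrametricDist K] {f : K[X]} (hf : f.Splits) {x α : K} (hα : f.IsRoot α)
    (hnear : ∀ β, f.IsRoot β → ‖x - α‖ ≤ ‖x - β‖) :
    ‖x - α‖ * ‖f.derivative.eval α‖ ≤ ‖f.eval x‖ := by
  classical
  rcases eq_or_ne f 0 with rfl | hf0
  · simp
  have hα' : α ∈ f.roots := (mem_roots hf0).mpr hα
  have hfactor : ∀ β ∈ f.roots.erase α, ‖α - β‖ ≤ ‖x - β‖ := fun β hβ => by
    have hβ : f.IsRoot β := (mem_roots hf0).mp (Multiset.mem_of_mem_erase hβ)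
    simpa only [dist_eq_norm] using
      IsUltrametricDist.dist_le_of_dist_le (x := x) (a := α) (b := β)
        (by simpa only [dist_eq_norm] using hnear β hβ)
  have hprod :
      ‖((f.roots.erase α).map (α - ·)).prod‖ ≤ ‖((f.roots.erase α).map (x - ·)).prod‖ := by
    simp only [← normHom_apply, map_multiset_prod, Multiset.map_map]
    exact Multiset.prod_map_le_prod_map₀ _ _ (fun β _ => norm_nonneg (α - β)) hfactor
  rw [hf.eval_root_derivative_eq_mul_prod hα', hf.eval_eq_mul_prod_erase_root hα' x]
  simp only [norm_mul]
  calc ‖x - α‖ * (‖f.leadingCoeff‖ * ‖((f.roots.erase α).map (α - ·)).prod‖)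
      ≤ ‖x - α‖ * (‖f.leadingCoeff‖ * ‖((f.roots.erase α).map (x - ·)).prod‖) := by gcongr
    _ = _ := by ring

end Polynomial

theorem stmt_5_general (p : ℕ) [Fact p.Prime]
    (L : Type*) [NormedField L] [Algebra ℚ_[p] L] [IsAlgClosed L] [IsUltrametricDist L]
    (hext : ∀ x : ℚ_[p], ‖(algebraMap ℚ_[p] L) x‖ = ‖x‖)
    (P : Polynomial ℤ) (ω : ℚ_[p]) (α : L)
    (hroot : Polynomial.aeval α P = 0)
    (hnear : ∀ β : L, Polynomial.aeval β P = 0 →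
      ‖algebraMap ℚ_[p] L ω - α‖ ≤ ‖algebraMap ℚ_[p] L ω - β‖)
    (hP' : Polynomial.aeval α (Polynomial.derivative P) ≠ 0) :
    ‖algebraMap ℚ_[p] L ω - α‖ ≤
      ‖Polynomial.aeval ω P‖ / ‖Polynomial.aeval α (Polynomial.derivative P)‖ := by
  have hkey :=
    (IsAlgClosed.splits (P.map (algebraMap ℤ L))).norm_sub_root_mul_norm_eval_derivative_le
    (x := algebraMap ℚ_[p] L ω) (α := α) (by rwa [IsRoot, eval_map_algebraMap])
    (fun β hβ => hnear β (by rwa [IsRoot, eval_map_algebraMap] at hβ))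
  rw [derivative_map, eval_map_algebraMap, eval_map_algebraMap, aeval_algebraMap_apply, hext]
    at hkey
  rwa [le_div_iff₀ (norm_pos_iff.mpr hP')]

theorem stmt_5 (p : ℕ) [Fact p.Prime]
    (L : Type*) [NormedField L] [Algebra ℚ_[p] L] [IsAlgClosed L] [IsUltrametricDist L]
    (hext : ∀ x : ℚ_[p], ‖(algebraMap ℚ_[p] L) x‖ = ‖x‖)
    (P : Polynomial ℤ) (hP : P ≠ 0) (ω : ℚ_[p]) (α : L)
    (hroot : Polynomial.aeval α P = 0)
    (hnear : ∀ β : L, Polynomial.aeval β P = 0 →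
      ‖algebraMap ℚ_[p] L ω - α‖ ≤ ‖algebraMap ℚ_[p] L ω - β‖)
    (hP' : Polynomial.aeval α (Polynomial.derivative P) ≠ 0) :
    ‖algebraMap ℚ_[p] L ω - α‖ ≤
      ‖Polynomial.aeval ω P‖ / ‖Polynomial.aeval α (Polynomial.derivative P)‖ :=
  stmt_5_general p L hext P ω α hroot hnear hP'
end

section
/- Let p be prime and n ≥ 1. For each ω ∈ ℤ_p, each δ ∈ (0,1], and each sufficiently large Q, there exists a nonzero polynomial P(x) = a_n x^n + ⋯ + a_1 x + a_0 ∈ ℤ[x] such that |P(ω)|_p < δ² C Q^{-n-1}, |a_j| ≤ δ^{-1} Q for all 0 ≤ j ≤ n, and |a_j|_p ≤ δ for all 2 ≤ j ≤ n, where C > 0 is an absolute constant (depending only on n and p). -/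
/-!
Dirichlet's box principle in `ℤ_[p]`: if more than `p ^ M` integer coefficient vectors are
available, two of them give values at `ω` that agree modulo `p ^ M`, and their difference is a
nonzero polynomial with `‖P(ω)‖ ≤ p ^ (-M)`. To get `|a_j|_p ≤ δ` for `j ≥ 2`, those coefficients
only run over multiples of `p ^ K` with `δ⁻¹ < p ^ K ≤ p δ⁻¹`, while `a_0, a_1` run over all of
`[0, δ⁻¹ Q]`. The box then has about `(δ⁻¹ Q) ^ 2 (Q / p) ^ (n - 1)` points, which gives the
factor `δ ^ 2`.
-/

open Polynomial

theorem abs_mul_le_of_abs_lt_floor_div_add_one {w v : ℤ} {H : ℝ} (hw : 0 < w) (hH : 0 ≤ H)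
    (hv : |v| < ((⌊H / w⌋₊ + 1 : ℕ) : ℤ)) : |(w * v : ℝ)| ≤ H := by
  have hv' : (|v| : ℝ) ≤ H / w := by
    have : |v| ≤ (⌊H / w⌋₊ : ℤ) := by push_cast at hv; omega
    exact (Int.cast_abs (R := ℝ) ▸ Int.cast_le.2 this).trans
      (by exact_mod_cast Nat.floor_le (by positivity))
  rw [abs_mul, abs_of_pos (by exact_mod_cast hw : (0 : ℝ) < w)]
  rwa [le_div_iff₀' (by exact_mod_cast hw)] at hv'

namespace PadicInt

variable {p : ℕ} [Fact p.Prime]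

theorem exists_ne_norm_sub_le_of_pow_lt_card {ι : Type*} [Fintype ι] (F : ι → ℤ_[p]) {M : ℕ}
    (hM : p ^ M < Fintype.card ι) : ∃ i j, i ≠ j ∧ ‖F i - F j‖ ≤ (p : ℝ) ^ (-(M : ℤ)) := by
  obtain ⟨i, j, hij, hF⟩ :=
    Fintype.exists_ne_map_eq_of_card_lt (fun i ↦ toZModPow M (F i)) (by rwa [ZMod.card])
  refine ⟨i, j, hij, ?_⟩
  rw [norm_le_pow_iff_mem_span_pow, ← ker_toZModPow, RingHom.mem_ker, map_sub, hF, sub_self]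

theorem exists_ne_norm_sub_le_div_card {ι : Type*} [Fintype ι] (F : ι → ℤ_[p])
    (hι : 1 < Fintype.card ι) : ∃ i j, i ≠ j ∧ ‖F i - F j‖ ≤ p / Fintype.card ι := by
  have hp : (0 : ℝ) < p := by exact_mod_cast (Fact.out : p.Prime).pos
  set M := Nat.log p (Fintype.card ι - 1)
  have hlt : p ^ M < Fintype.card ι := (Nat.pow_log_le_self p (by omega)).trans_lt (by omega)
  have hle : Fintype.card ι ≤ p ^ (M + 1) :=
    Nat.le_of_pred_lt (Nat.lt_pow_succ_log_self (Fact.out : p.Prime).one_lt _)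
  obtain ⟨i, j, hij, hF⟩ := exists_ne_norm_sub_le_of_pow_lt_card F hlt
  refine ⟨i, j, hij, hF.trans ?_⟩
  calc (p : ℝ) ^ (-(M : ℤ)) = p / p ^ (M + 1) := by
        rw [zpow_neg, zpow_natCast, pow_succ, div_mul_cancel_right₀ (by positivity)]
    _ ≤ p / Fintype.card ι := by gcongr; exact_mod_cast hle

theorem exists_ne_zero_norm_aeval_ofFn_le (ω : ℤ_[p]) {n : ℕ} (w : Fin n → ℤ) (c : Fin n → ℕ)
    (hc : 1 < ∏ j, c j) : ∃ v : Fin n → ℤ, v ≠ 0 ∧ (∀ j, |v j| < c j) ∧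
      ‖aeval ω (ofFn n (w * v))‖ ≤ p / (∏ j, c j : ℕ) := by
  obtain ⟨f, g, hfg, hF⟩ := exists_ne_norm_sub_le_div_card
    (fun d : (∀ j, Fin (c j)) ↦ aeval ω (ofFn n (w * fun j ↦ (d j : ℤ)))) (by simpa using hc)
  refine ⟨(fun j ↦ (f j : ℤ)) - fun j ↦ (g j : ℤ), fun h ↦ hfg ?_, fun j ↦ ?_, ?_⟩
  · funext j
    exact Fin.ext (by simpa [sub_eq_zero] using congrFun h j)
  · have := (f j).isLt
    have := (g j).isLt
    rw [Pi.sub_apply, abs_lt]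
    constructor <;> omega
  · simpa [← mul_sub, ← map_sub] using hF

theorem exists_ne_zero_norm_aeval_lt (ω : ℤ_[p]) {n : ℕ} (w : Fin n → ℤ) (hw : ∀ j, 0 < w j)
    {H : ℝ} (hH : 0 < H) (hwH : ∏ j, (w j : ℝ) < H ^ n) :
    ∃ P : ℤ[X], P ≠ 0 ∧ P.degree < n ∧ (∀ j : Fin n, |(P.coeff j : ℝ)| ≤ H ∧ w j ∣ P.coeff j) ∧
      ‖aeval ω P‖ < p * (∏ j, (w j : ℝ)) / H ^ n := by
  have hw' j : (0 : ℝ) < w j := by exact_mod_cast hw j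
  let c : Fin n → ℕ := fun j ↦ ⌊H / w j⌋₊ + 1
  have hn : (Finset.univ : Finset (Fin n)).Nonempty := by
    refine Finset.univ_nonempty_iff.2 ⟨⟨0, Nat.pos_of_ne_zero fun hn ↦ ?_⟩⟩
    subst hn
    simp at hwH
  have hbox : ∏ j, H / w j = H ^ n / ∏ j, (w j : ℝ) := by
    rw [Finset.prod_div_distrib, Finset.prod_const, Finset.card_univ, Fintype.card_fin]
  have hHw : 1 < ∏ j, H / w j := by
    rwa [hbox, one_lt_div (Finset.prod_pos fun j _ ↦ hw' j)]
  have hcount : ∏ j, H / w j < ∏ j, (c j : ℝ) :=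
    Finset.prod_lt_prod_of_nonempty (fun j _ ↦ div_pos hH (hw' j))
      (fun j _ ↦ by simpa [c] using Nat.lt_floor_add_one (H / w j)) hn
  obtain ⟨v, hv0, hvc, hvω⟩ :=
    exists_ne_zero_norm_aeval_ofFn_le ω w c (by exact_mod_cast hHw.trans hcount)
  refine ⟨ofFn n (w * v), ?_, ofFn_degree_lt _, fun j ↦ ⟨?_, ?_⟩, ?_⟩
  · rw [Ne, ← map_zero (ofFn n), (injective_ofFn _).eq_iff]
    obtain ⟨j, hj⟩ := Function.ne_iff.1 hv0
    exact Function.ne_iff.2 ⟨j, mul_ne_zero (hw j).ne' hj⟩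
  · simpa using abs_mul_le_of_abs_lt_floor_div_add_one (hw j) hH.le (hvc j)
  · simp
  · refine hvω.trans_lt ?_
    push_cast
    rw [← div_div_eq_mul_div, ← hbox]
    exact div_lt_div_of_pos_left (by exact_mod_cast (Fact.out : p.Prime).pos) (one_pos.trans hHw)
      hcount

theorem exists_ne_zero_pow_dvd_coeff_norm_aeval_lt (ω : ℤ_[p]) (m K : ℕ) {H : ℝ} (hH : 0 < H)
    (hK : ((p : ℝ) ^ K) ^ m < H ^ (m + 2)) :
    ∃ P : ℤ[X], P ≠ 0 ∧ P.natDegree ≤ m + 1 ∧ (∀ j ≤ m + 1, |(P.coeff j : ℝ)| ≤ H) ∧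
      (∀ j, 2 ≤ j → j ≤ m + 1 → (p ^ K : ℤ) ∣ P.coeff j) ∧
      ‖aeval ω P‖ < p * ((p : ℝ) ^ K) ^ m / H ^ (m + 2) := by
  let w : Fin (m + 2) → ℤ := fun j ↦ if (j : ℕ) < 2 then 1 else p ^ K
  have hw j : 0 < w j := by dsimp only [w]; split_ifs <;> simp [(Fact.out : p.Prime).pos]
  have hprod : ∏ j, (w j : ℝ) = (p ^ K) ^ m := by simp [Fin.prod_univ_succ, w]
  obtain ⟨P, hP0, hdeg, hcoeff, hω⟩ := exists_ne_zero_norm_aeval_lt ω w hw hH (hprod ▸ hK)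
  refine ⟨P, hP0, Nat.lt_succ_iff.1 ((natDegree_lt_iff_degree_lt hP0).2 hdeg),
    fun j hj ↦ (hcoeff ⟨j, by omega⟩).1, fun j hj2 hjm ↦ ?_, hprod ▸ hω⟩
  simpa [w, show ¬j ≤ 1 by omega] using (hcoeff ⟨j, by omega⟩).2

end PadicInt

theorem stmt_11 (p n : ℕ) [Fact p.Prime] (hn : 1 ≤ n) :
    ∃ C : ℝ, 0 < C ∧ ∀ δ : ℝ, 0 < δ → δ ≤ 1 → ∃ Q₀ : ℝ, ∀ Q : ℝ, Q₀ ≤ Q →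
      ∀ ω : ℤ_[p], ∃ P : Polynomial ℤ, P ≠ 0 ∧ P.natDegree ≤ n ∧
        ‖Polynomial.aeval ω P‖ < δ ^ 2 * C * Q ^ (-(n : ℤ) - 1) ∧
        (∀ j ≤ n, (|P.coeff j| : ℝ) ≤ δ⁻¹ * Q) ∧
        (∀ j, 2 ≤ j → j ≤ n → ‖((P.coeff j : ℤ_[p]))‖ ≤ δ) := by
  obtain ⟨m, rfl⟩ := Nat.exists_eq_add_of_le' hn
  have hp : (1 : ℝ) < p := by exact_mod_cast (Fact.out : p.Prime).one_lt
  refine ⟨p ^ (m + 1), by positivity, fun δ hδ hδ1 ↦ ⟨p, fun Q hpQ ω ↦ ?_⟩⟩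
  have hQ0 : 0 < Q := one_pos.trans (hp.trans_le hpQ)
  obtain ⟨k, hkδ, hδk⟩ := exists_nat_pow_near (one_le_inv₀ hδ |>.2 hδ1) hp
  have hweight : (p : ℝ) ^ (k + 1) ≤ p * δ⁻¹ := by rw [pow_succ']; gcongr
  have hH : 1 < δ⁻¹ * Q := one_lt_mul_of_le_of_lt (one_le_inv₀ hδ |>.2 hδ1) (hp.trans_le hpQ)
  obtain ⟨P, hP0, hdeg, habs, hdvd, hω⟩ :=
    PadicInt.exists_ne_zero_pow_dvd_coeff_norm_aeval_lt ω m (k + 1) (one_pos.trans hH) <|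
      calc ((p : ℝ) ^ (k + 1)) ^ m ≤ (δ⁻¹ * Q) ^ m := by
            gcongr; exact hweight.trans (by rw [mul_comm]; gcongr)
        _ < (δ⁻¹ * Q) ^ (m + 2) := pow_lt_pow_right₀ hH (by omega)
  refine ⟨P, hP0, hdeg, hω.trans_le ?_, habs, fun j hj2 hjm ↦ ?_⟩
  · rw [show -((m + 1 : ℕ) : ℤ) - 1 = -((m + 2 : ℕ) : ℤ) by push_cast; ring, zpow_neg,
      zpow_natCast]
    calc (p : ℝ) * (p ^ (k + 1)) ^ m / (δ⁻¹ * Q) ^ (m + 2)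
        ≤ p * (p * δ⁻¹) ^ m / (δ⁻¹ * Q) ^ (m + 2) := by gcongr
      _ = δ ^ 2 * p ^ (m + 1) * (Q ^ (m + 2))⁻¹ := by
          rw [mul_pow, mul_pow, inv_pow, inv_pow, pow_add δ m 2]
          field_simp [hQ0.ne']
          ring
  · refine (PadicInt.norm_int_le_pow_iff_dvd.2 (hdvd j hj2 hjm)).trans ?_
    rw [zpow_neg, zpow_natCast]
    exact inv_le_of_inv_le₀ hδ hδk.le
end

section
/- Let (Γ, N) be a regular system of points in a disc K₀ ⊂ ℚ_p and let Ψ̃ : ℝ₊ → ℝ₊ be monotonically decreasing with ∑_{h=1}^∞ Ψ̃(h) = ∞. Then the set of ω ∈ K₀ such that |ω − γ|_p < Ψ̃(N(γ)) for infinitely many γ ∈ Γ has full Haar measure in K₀. -/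
open MeasureTheory

variable (p : ℕ) [Fact p.Prime]

/-- A disc in `ℚ_[p]`. -/
def IsPadicDisc (K : Set ℚ_[p]) : Prop :=
  ∃ (a : ℚ_[p]) (r : ℝ), 0 < r ∧ K = {x | ‖x - a‖ < r}

/-- `(Γ, N)` is a regular system of points in `K₀` (w.r.t. the Haar measure `μ`):
there is `C > 0` such that for every disc `K ⊆ K₀` and all sufficiently large `T`
there are points `γ₁, …, γ_t ∈ Γ ∩ K` with `N(γᵢ) ≤ T`, pairwise distances at least
`T⁻¹`, and `t ≥ C·T·μ(K)`. -/
def IsRegularSystem [MeasurableSpace ℚ_[p]] (μ : Measure ℚ_[p]) (K₀ : Set ℚ_[p])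
    (Γ : Set ℚ_[p]) (N : ℚ_[p] → ℝ) : Prop :=
  ∃ C : ℝ, 0 < C ∧ ∀ K : Set ℚ_[p], K ⊆ K₀ → IsPadicDisc p K →
    ∃ T₀ : ℝ, ∀ T : ℝ, T₀ ≤ T →
      ∃ (t : ℕ) (γ : Fin t → ℚ_[p]),
        (∀ i, γ i ∈ Γ ∩ K) ∧ (∀ i, N (γ i) ≤ T) ∧
        (∀ i j, i ≠ j → T⁻¹ ≤ ‖γ i - γ j‖) ∧
        C * T * (μ K).toReal ≤ (t : ℝ)

/-!
Fix a disc `I = B(a, r) ⊆ K₀`. At the dyadic scales `Tₙ = 2^(n+s)` regularity provides about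
`Tₙ μ(I)` points of `Γ ∩ I` with `N ≤ Tₙ` which are `Tₙ⁻¹`-separated; let `Aₙ` be the union of
the balls of radius `ρₙ = min (Ψ Tₙ) Tₙ⁻¹` around them. In the ultrametric space `ℚ_[p]` these
balls are disjoint, so `μ(Aₙ) ≳ Tₙ ρₙ μ(I)`, and counting the points of level `l` near a point of
level `k ≤ l` gives `μ(Aₖ ∩ Aₗ) ≲ μ(I) (Tₖ ρₖ Tₗ ρₗ + Tₖ ρₗ)`. Since `∑ Tₙ ρₙ = ∞` by Cauchy
condensation, the Chung–Erdős inequality gives `μ(limsup Aₙ) ≥ c μ(I)` with `c` independent of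
`I`, and off the null set `Γ` the set `limsup Aₙ` consists of `Ψ`-approximable points. Hence the
approximable points have lower density at least `c` at every point of `K₀`, and the Lebesgue
density theorem for the doubling Haar measure leaves only a null set of `K₀` outside them.
-/

open Metric Filter Topology
open scoped ENNReal Finset

lemma Summable.of_min_one {ι : Type*} {f : ι → ℝ} (h : Summable fun i => min (f i) 1) :
    Summable f :=
  h.congr_cofinite <| (h.tendsto_cofinite_zero.eventually_lt_const one_pos).mono fun _ hi =>
    min_eq_left (le_of_lt (lt_of_not_ge fun h1 => hi.not_ge (min_eq_right h1).ge))

lemma not_summable_min_two_pow_mul {Ψ : ℝ → ℝ} (hΨ : ∀ x, 0 < x → 0 ≤ Ψ x)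
    (hΨmono : AntitoneOn Ψ (Set.Ioi 0)) (hdiv : ¬ Summable fun n : ℕ => Ψ (n + 1)) :
    ¬ Summable fun n : ℕ => min ((2 : ℝ) ^ n * Ψ (2 ^ n)) 1 := by
  have hcond : ¬ Summable fun k : ℕ => (2 : ℝ) ^ k * Ψ ((2 ^ k : ℕ) + 1) := by
    rwa [summable_condensed_iff_of_nonneg (f := fun n : ℕ => Ψ (n + 1))
      (fun n => hΨ _ (by positivity)) fun m n _ hmn =>
        hΨmono (Set.mem_Ioi.2 (by positivity)) (Set.mem_Ioi.2 (by positivity)) (by gcongr)]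
  refine fun h => hcond (Summable.of_nonneg_of_le (fun k => ?_) (fun k => ?_) h.of_min_one)
  · exact mul_nonneg (by positivity) (hΨ _ (by positivity))
  · push_cast
    gcongr
    exact hΨmono (Set.mem_Ioi.2 (by positivity)) (Set.mem_Ioi.2 (by positivity)) (by linarith)

lemma not_summable_two_pow_add_mul_min_inv {Ψ : ℝ → ℝ} (hΨ : ∀ x, 0 < x → 0 ≤ Ψ x)
    (hΨmono : AntitoneOn Ψ (Set.Ioi 0)) (hdiv : ¬ Summable fun n : ℕ => Ψ (n + 1)) (s : ℕ) :
    ¬ Summable fun n : ℕ => (2 : ℝ) ^ (n + s) * min (Ψ (2 ^ (n + s))) (2 ^ (n + s))⁻¹ := by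
  have h (n : ℕ) : (2 : ℝ) ^ (n + s) * min (Ψ (2 ^ (n + s))) (2 ^ (n + s))⁻¹ =
      min (2 ^ (n + s) * Ψ (2 ^ (n + s))) 1 := by
    rw [mul_min_of_nonneg _ _ (by positivity), mul_inv_cancel₀ (by positivity)]
  simp_rw [h]
  exact fun hs => not_summable_min_two_pow_mul hΨ hΨmono hdiv ((summable_nat_add_iff s).1 hs)

lemma sum_sum_ite_le_two_mul_sum {T ρ : ℕ → ℝ} (hT : ∀ n, 0 ≤ T n) (hρ : ∀ n, 0 ≤ ρ n)
    (hTsum : ∀ l, ∑ k ∈ Finset.range (l + 1), T k ≤ 2 * T l) (F : Finset ℕ) :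
    ∑ k ∈ F, ∑ l ∈ F, (if k ≤ l then T k * ρ l else 0) ≤ 2 * ∑ l ∈ F, T l * ρ l := by
  rw [Finset.sum_comm, Finset.mul_sum]
  refine Finset.sum_le_sum fun l _ => ?_
  rw [← Finset.sum_filter, ← Finset.sum_mul, ← mul_assoc]
  refine mul_le_mul_of_nonneg_right (le_trans ?_ (hTsum l)) (hρ l)
  refine Finset.sum_le_sum_of_subset_of_nonneg (fun k hk => ?_) fun k _ _ => hT k
  rw [Finset.mem_range]
  exact Nat.lt_succ_of_le (Finset.mem_filter.1 hk).2

lemma sum_range_two_pow_add_le (s l : ℕ) :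
    ∑ k ∈ Finset.range (l + 1), (2 : ℝ) ^ (k + s) ≤ 2 * 2 ^ (l + s) := by
  simp_rw [pow_add, ← Finset.sum_mul, geom_sum_eq (by norm_num : (2 : ℝ) ≠ 1)]
  norm_num
  ring_nf
  linarith [pow_pos (zero_lt_two (α := ℝ)) s]

lemma Set.infinite_of_forall_exists_dist_lt {α : Type*} [MetricSpace α] {s : Set α} {x : α}
    (hx : x ∉ s) (h : ∀ ε > 0, ∃ y ∈ s, dist x y < ε) : s.Infinite :=
  fun hs => hx (hs.isClosed.closure_eq ▸ Metric.mem_closure_iff.2 h)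

lemma IsUltrametricDist.pairwiseDisjoint_ball_of_pairwise_le_dist {α : Type*}
    [PseudoMetricSpace α] [IsUltrametricDist α] {s : Set α} {δ ρ : ℝ}
    (hs : s.Pairwise fun x y => δ ≤ dist x y) (hρ : ρ ≤ δ) :
    s.PairwiseDisjoint fun x => ball x ρ := by
  intro x hx y hy hxy
  refine Set.disjoint_left.2 fun z hzx hzy => (hs hx hy hxy).not_gt ?_
  rw [mem_ball] at hzx hzy
  exact (IsUltrametricDist.dist_triangle_max x z y).trans_lt
    (max_lt (by rwa [dist_comm]) hzy) |>.trans_le hρ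

lemma IsUltrametricDist.biUnion_ball_subset_ball {α : Type*} [PseudoMetricSpace α]
    [IsUltrametricDist α] {P : Finset α} {a : α} {r ρ : ℝ} (hP : ∀ x ∈ P, x ∈ ball a r)
    (hρ : ρ ≤ r) : ⋃ x ∈ P, ball x ρ ⊆ ball a r :=
  Set.iUnion₂_subset fun x hx =>
    (ball_subset_ball hρ).trans (IsUltrametricDist.ball_eq_of_mem (hP x hx)).symm.subset

lemma limsup_biUnion_ball_sdiff_subset_setOf_infinite {E : Type*} [NormedAddCommGroup E]
    {Γ : Set E} {N : E → ℝ} (hN : ∀ γ ∈ Γ, 0 < N γ) {Ψ : ℝ → ℝ}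
    (hΨ : AntitoneOn Ψ (Set.Ioi 0)) {T ρ : ℕ → ℝ} (hT : ∀ n, 0 < T n)
    (hρΨ : ∀ n, ρ n ≤ Ψ (T n)) (hρ : Tendsto ρ atTop (𝓝 0)) {P : ℕ → Finset E}
    (hPΓ : ∀ n, ∀ x ∈ P n, x ∈ Γ) (hPN : ∀ n, ∀ x ∈ P n, N x ≤ T n) :
    limsup (fun n => ⋃ x ∈ P n, ball x (ρ n)) atTop \ Γ ⊆
      {ω | {γ ∈ Γ | ‖ω - γ‖ < Ψ (N γ)}.Infinite} := by
  rintro x ⟨hx, hxΓ⟩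
  refine Set.infinite_of_forall_exists_dist_lt (fun h => hxΓ h.1) fun ε hε => ?_
  obtain ⟨k, hxk, hk⟩ := ((mem_limsup_iff_frequently_mem.1 hx).and_eventually
    (hρ.eventually (gt_mem_nhds hε))).exists
  simp only [Set.mem_iUnion, exists_prop] at hxk
  obtain ⟨y, hy, hxy⟩ := hxk
  refine ⟨y, ⟨hPΓ k y hy, ?_⟩, (mem_ball.1 hxy).trans hk⟩
  calc ‖x - y‖ < ρ k := mem_ball_iff_norm.1 hxy
    _ ≤ Ψ (T k) := hρΨ k
    _ ≤ Ψ (N y) := hΨ (hN y (hPΓ k y hy)) (hT k) (hPN k y hy)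

lemma measurableSet_setOf_infinite_sep {α ι : Type*} [MeasurableSpace α] {Γ : Set ι}
    (hΓ : Γ.Countable) {B : ι → Set α} (hB : ∀ i ∈ Γ, MeasurableSet (B i)) :
    MeasurableSet {x | {i ∈ Γ | x ∈ B i}.Infinite} := by
  have : {x | {i ∈ Γ | x ∈ B i}.Infinite} = ⋂ F ∈ {F | F.Finite ∧ F ⊆ Γ}, ⋃ i ∈ Γ \ F, B i := by
    ext x
    simp only [Set.mem_ofPred_eq, Set.mem_iInter, Set.mem_iUnion, Set.mem_sdiff, exists_prop]
    refine ⟨fun hx F ⟨hF, _⟩ => ?_, fun hx hfin => ?_⟩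
    · obtain ⟨i, ⟨hiΓ, hiB⟩, hiF⟩ := Set.not_subset.1 fun h => hx (hF.subset h)
      exact ⟨i, ⟨hiΓ, hiF⟩, hiB⟩
    · obtain ⟨i, ⟨hiΓ, hiF⟩, hiB⟩ := hx _ ⟨hfin, Set.sep_subset _ _⟩
      exact hiF ⟨hiΓ, hiB⟩
  rw [this]
  exact .biInter (Set.countable_ofPred_finite_subset hΓ) fun F _ =>
    .biUnion (hΓ.mono Set.sdiff_subset) fun i hi => hB i hi.1

theorem MeasureTheory.sq_lintegral_mul_le {α : Type*} [MeasurableSpace α] (μ : Measure α)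
    {f g : α → ℝ≥0∞} (hf : AEMeasurable f μ) (hg : AEMeasurable g μ) :
    (∫⁻ x, f x * g x ∂μ) ^ 2 ≤ (∫⁻ x, f x ^ 2 ∂μ) * ∫⁻ x, g x ^ 2 ∂μ := by
  have hsq (y : ℝ≥0∞) : (y ^ (1 / 2 : ℝ)) ^ 2 = y := by
    rw [← ENNReal.rpow_natCast, ← ENNReal.rpow_mul]; norm_num
  have h := ENNReal.lintegral_mul_le_Lp_mul_Lq μ Real.HolderConjugate.two_two hf hg
  simp only [ENNReal.rpow_two, Pi.mul_apply] at h
  calc (∫⁻ x, f x * g x ∂μ) ^ 2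
      ≤ ((∫⁻ x, f x ^ 2 ∂μ) ^ (1 / 2 : ℝ) * (∫⁻ x, g x ^ 2 ∂μ) ^ (1 / 2 : ℝ)) ^ 2 := by gcongr
    _ = (∫⁻ x, f x ^ 2 ∂μ) * ∫⁻ x, g x ^ 2 ∂μ := by rw [mul_pow, hsq, hsq]

theorem MeasureTheory.sq_sum_measure_le_measure_biUnion_mul {α ι : Type*} [MeasurableSpace α]
    (μ : Measure α) (s : Finset ι) {A : ι → Set α} (hA : ∀ i, MeasurableSet (A i)) :
    (∑ i ∈ s, μ (A i)) ^ 2 ≤ μ (⋃ i ∈ s, A i) * ∑ i ∈ s, ∑ j ∈ s, μ (A i ∩ A j) := by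
  set U := ⋃ i ∈ s, A i
  set f : α → ℝ≥0∞ := fun x => ∑ i ∈ s, (A i).indicator 1 x
  have hU : MeasurableSet U := .biUnion s.countable_toSet fun i _ => hA i
  have hf : Measurable f := Finset.measurable_sum s fun i _ => measurable_one.indicator (hA i)
  have hfU (x : α) : f x * U.indicator 1 x = f x := by
    by_cases hx : x ∈ U
    · simp [hx]
    · have : ∀ i ∈ s, x ∉ A i := fun i hi hxi => hx (Set.mem_biUnion hi hxi)
      simp [f, Finset.sum_eq_zero (fun i hi => Set.indicator_of_notMem (this i hi) 1)]
  have hf1 : ∫⁻ x, f x ∂μ = ∑ i ∈ s, μ (A i) := by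
    rw [lintegral_finsetSum _ fun i _ => measurable_one.indicator (hA i)]
    simp [lintegral_indicator_one (hA _)]
  have hf2 : ∫⁻ x, f x ^ 2 ∂μ = ∑ i ∈ s, ∑ j ∈ s, μ (A i ∩ A j) := by
    have hsq (x : α) : f x ^ 2 = ∑ i ∈ s, ∑ j ∈ s, (A i ∩ A j).indicator 1 x := by
      simp only [f, sq, Finset.sum_mul_sum, Set.inter_indicator_one, Pi.mul_apply]
    simp only [hsq]
    rw [lintegral_finsetSum _ fun i _ => Finset.measurable_sum _ fun j _ =>
      measurable_one.indicator ((hA i).inter (hA j))]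
    refine Finset.sum_congr rfl fun i _ => ?_
    rw [lintegral_finsetSum _ fun j _ => measurable_one.indicator ((hA i).inter (hA j))]
    simp [lintegral_indicator_one ((hA _).inter (hA _))]
  have hg2 : ∫⁻ x, U.indicator 1 x ^ 2 ∂μ = μ U := by
    have hsq (x : α) : U.indicator 1 x ^ 2 = U.indicator (1 : α → ℝ≥0∞) x := by
      by_cases hx : x ∈ U <;> simp [hx]
    simp only [hsq, lintegral_indicator_one hU]
  have := sq_lintegral_mul_le μ hf.aemeasurable (measurable_one.indicator hU).aemeasurable
  simp only [hfU, hf1, hf2, hg2] at this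
  rwa [mul_comm] at this

theorem MeasureTheory.sq_sum_measureReal_le_measureReal_biUnion_mul {α ι : Type*}
    [MeasurableSpace α] (μ : Measure α) (s : Finset ι) {A : ι → Set α}
    (hA : ∀ i, MeasurableSet (A i)) (hU : μ (⋃ i ∈ s, A i) ≠ ∞) :
    (∑ i ∈ s, μ.real (A i)) ^ 2 ≤
      μ.real (⋃ i ∈ s, A i) * ∑ i ∈ s, ∑ j ∈ s, μ.real (A i ∩ A j) := by
  have hAi (i : ι) (hi : i ∈ s) : μ (A i) ≠ ∞ :=
    measure_ne_top_of_subset (Set.subset_biUnion_of_mem hi) hU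
  have hAij (i : ι) (hi : i ∈ s) (j : ι) : μ (A i ∩ A j) ≠ ∞ :=
    measure_ne_top_of_subset Set.inter_subset_left (hAi i hi)
  have hrow (i : ι) (hi : i ∈ s) : ∑ j ∈ s, μ (A i ∩ A j) ≠ ∞ :=
    ENNReal.sum_ne_top.2 fun j _ => hAij i hi j
  have h := ENNReal.toReal_mono (ENNReal.mul_ne_top hU (ENNReal.sum_ne_top.2 hrow))
    (sq_sum_measure_le_measure_biUnion_mul μ s hA)
  rwa [ENNReal.toReal_pow, ENNReal.toReal_mul, ENNReal.toReal_sum hAi, ENNReal.toReal_sum hrow,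
    Finset.sum_congr rfl fun i hi => ENNReal.toReal_sum fun j _ => hAij i hi j] at h

theorem MeasureTheory.div_le_measureReal_biUnion_of_sum_measureReal_inter_le {α ι : Type*}
    [MeasurableSpace α] (μ : Measure α) (s : Finset ι) {A : ι → Set α}
    (hA : ∀ i, MeasurableSet (A i)) (hU : μ (⋃ i ∈ s, A i) ≠ ∞) {a : ι → ℝ} {c C : ℝ}
    (hc : 0 ≤ c) (hC : 0 < C) (hlow : ∀ i ∈ s, c * a i ≤ μ.real (A i))
    (hpair : ∑ i ∈ s, ∑ j ∈ s, μ.real (A i ∩ A j) ≤ C * ((∑ i ∈ s, a i) ^ 2 + ∑ i ∈ s, a i))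
    (hs : 1 ≤ ∑ i ∈ s, a i) :
    c ^ 2 / (2 * C) ≤ μ.real (⋃ i ∈ s, A i) := by
  set M := ∑ i ∈ s, a i
  have hM : 0 < M := one_pos.trans_le hs
  have hsum : c * M ≤ ∑ i ∈ s, μ.real (A i) := by
    rw [Finset.mul_sum]; exact Finset.sum_le_sum hlow
  have key : c ^ 2 * M ^ 2 ≤ μ.real (⋃ i ∈ s, A i) * (2 * C) * M ^ 2 :=
    calc c ^ 2 * M ^ 2 = (c * M) ^ 2 := by ring
      _ ≤ (∑ i ∈ s, μ.real (A i)) ^ 2 := by gcongr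
      _ ≤ μ.real (⋃ i ∈ s, A i) * (C * (M ^ 2 + M)) :=
        (sq_sum_measureReal_le_measureReal_biUnion_mul μ s hA hU).trans
          (mul_le_mul_of_nonneg_left hpair measureReal_nonneg)
      _ ≤ μ.real (⋃ i ∈ s, A i) * (2 * C * M ^ 2) :=
        mul_le_mul_of_nonneg_left
          (by nlinarith [mul_nonneg (mul_nonneg hC.le hM.le) (sub_nonneg.2 hs)])
          measureReal_nonneg
      _ = μ.real (⋃ i ∈ s, A i) * (2 * C) * M ^ 2 := by ring
  rw [div_le_iff₀ (by positivity)]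
  exact le_of_mul_le_mul_right key (by positivity)

lemma MeasureTheory.sum_sum_measureReal_inter_le {α : Type*} [MeasurableSpace α]
    (μ : Measure α) {A : ℕ → Set α} {T ρ : ℕ → ℝ} (hT : ∀ n, 0 ≤ T n) (hρ : ∀ n, 0 ≤ ρ n)
    (hTsum : ∀ l, ∑ k ∈ Finset.range (l + 1), T k ≤ 2 * T l) {β : ℝ} (hβ : 0 ≤ β)
    (hpair : ∀ k l, k ≤ l → μ.real (A k ∩ A l) ≤ β * (T k * ρ k * (T l * ρ l) + T k * ρ l))
    (F : Finset ℕ) :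
    ∑ k ∈ F, ∑ l ∈ F, μ.real (A k ∩ A l) ≤
      4 * β * ((∑ k ∈ F, T k * ρ k) ^ 2 + ∑ k ∈ F, T k * ρ k) := by
  have hsym (k l : ℕ) : μ.real (A k ∩ A l) ≤ β * (T k * ρ k * (T l * ρ l) +
      (if k ≤ l then T k * ρ l else 0) + (if l ≤ k then T l * ρ k else 0)) := by
    have hkl0 : 0 ≤ (if k ≤ l then T k * ρ l else 0) := by
      split_ifs <;> first | exact le_rfl | exact mul_nonneg (hT k) (hρ l)
    have hlk0 : 0 ≤ (if l ≤ k then T l * ρ k else 0) := by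
      split_ifs <;> first | exact le_rfl | exact mul_nonneg (hT l) (hρ k)
    rcases le_total k l with hkl | hlk
    · refine (hpair k l hkl).trans (mul_le_mul_of_nonneg_left ?_ hβ)
      rw [if_pos hkl]; linarith
    · rw [Set.inter_comm]
      refine (hpair l k hlk).trans (mul_le_mul_of_nonneg_left ?_ hβ)
      rw [if_pos hlk]; linarith
  have h1 := sum_sum_ite_le_two_mul_sum hT hρ hTsum F
  have h2 := sum_sum_ite_le_two_mul_sum hT hρ hTsum F
  rw [Finset.sum_comm] at h2
  have hM : 0 ≤ ∑ k ∈ F, T k * ρ k := Finset.sum_nonneg fun k _ => mul_nonneg (hT k) (hρ k)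
  calc ∑ k ∈ F, ∑ l ∈ F, μ.real (A k ∩ A l)
      ≤ ∑ k ∈ F, ∑ l ∈ F, β * (T k * ρ k * (T l * ρ l) +
        (if k ≤ l then T k * ρ l else 0) + (if l ≤ k then T l * ρ k else 0)) :=
        Finset.sum_le_sum fun k _ => Finset.sum_le_sum fun l _ => hsym k l
    _ = β * ((∑ k ∈ F, T k * ρ k) ^ 2 +
        ∑ k ∈ F, ∑ l ∈ F, (if k ≤ l then T k * ρ l else 0) +
        ∑ k ∈ F, ∑ l ∈ F, (if l ≤ k then T l * ρ k else 0)) := by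
        simp only [← Finset.mul_sum, Finset.sum_add_distrib, sq, Finset.sum_mul_sum]
    _ ≤ β * (4 * ((∑ k ∈ F, T k * ρ k) ^ 2 + ∑ k ∈ F, T k * ρ k)) :=
        mul_le_mul_of_nonneg_left (by nlinarith) hβ
    _ = 4 * β * ((∑ k ∈ F, T k * ρ k) ^ 2 + ∑ k ∈ F, T k * ρ k) := by ring

theorem MeasureTheory.ofReal_le_measure_limsup_of_sum_measureReal_inter_le {α : Type*}
    [MeasurableSpace α] (μ : Measure α) {A : ℕ → Set α} (hA : ∀ n, MeasurableSet (A n))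
    (hfin : μ (⋃ n, A n) ≠ ∞) {a : ℕ → ℝ} (ha : ∀ n, 0 ≤ a n) (hdiv : ¬ Summable a)
    {c C : ℝ} (hc : 0 ≤ c) (hC : 0 < C) (hlow : ∀ n, c * a n ≤ μ.real (A n))
    (hpair : ∀ s : Finset ℕ, ∑ k ∈ s, ∑ l ∈ s, μ.real (A k ∩ A l) ≤
      C * ((∑ k ∈ s, a k) ^ 2 + ∑ k ∈ s, a k)) :
    ENNReal.ofReal (c ^ 2 / (2 * C)) ≤ μ (limsup A atTop) := by
  have htail (n : ℕ) : ENNReal.ofReal (c ^ 2 / (2 * C)) ≤ μ (⋃ k ≥ n, A k) := by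
    have htend := (not_summable_iff_tendsto_nat_atTop_of_nonneg fun k => ha (k + n)).1
      (mt (summable_nat_add_iff n).1 hdiv)
    obtain ⟨m, hm⟩ := (htend.eventually_ge_atTop 1).exists
    have hIco : ∑ k ∈ Finset.Ico n (n + m), a k = ∑ i ∈ Finset.range m, a (i + n) := by
      rw [Finset.sum_Ico_eq_sum_range, Nat.add_sub_cancel_left]; simp only [add_comm]
    rw [← hIco] at hm
    have hU : μ (⋃ k ∈ Finset.Ico n (n + m), A k) ≠ ∞ :=
      measure_ne_top_of_subset (Set.iUnion₂_subset fun k _ => Set.subset_iUnion A k) hfin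
    refine (ENNReal.ofReal_le_ofReal (div_le_measureReal_biUnion_of_sum_measureReal_inter_le μ
      _ hA hU hc hC (fun k _ => hlow k) (hpair _) hm)).trans ?_
    rw [ofReal_measureReal hU]
    exact measure_mono (Set.iUnion₂_subset fun k hk =>
      Set.subset_biUnion_of_mem (u := A) (Finset.mem_Ico.1 hk).1)
  have hanti : Antitone fun n => ⋃ k ≥ n, A k := fun n m h =>
    Set.biUnion_subset_biUnion_left fun k hk => le_trans h hk
  rw [limsup_eq_iInf_iSup_of_nat]
  simp only [Set.iSup_eq_iUnion, Set.iInf_eq_iInter]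
  rw [hanti.measure_iInter (fun n => (MeasurableSet.biUnion (Set.to_countable _)
    fun k _ => hA k).nullMeasurableSet)
    ⟨0, measure_ne_top_of_subset (Set.iUnion₂_subset fun k _ => Set.subset_iUnion A k) hfin⟩]
  exact le_iInf htail

theorem IsUnifLocDoublingMeasure.measure_diff_eq_zero_of_le_measure_inter_closedBall
    {α : Type*} [PseudoMetricSpace α] [SecondCountableTopology α] [MeasurableSpace α]
    [BorelSpace α] (μ : Measure α) [IsLocallyFiniteMeasure μ] [IsUnifLocDoublingMeasure μ]
    {S W : Set α} (hW : MeasurableSet W) {c : ℝ≥0∞} (hc : c ≠ 0)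
    (h : ∀ x ∈ S, ∀ᶠ r in 𝓝[>] 0, c * μ (closedBall x r) ≤ μ (W ∩ closedBall x r)) :
    μ (S \ W) = 0 := by
  rw [← Measure.restrict_apply_self, measure_eq_zero_iff_ae_notMem]
  filter_upwards [IsUnifLocDoublingMeasure.ae_tendsto_measure_inter_div μ (S \ W) 1]
    with x hx hxSW
  have hlim := hx (fun _ => x) id tendsto_id
    (eventually_nhdsWithin_of_forall fun r (hr : 0 < r) => by simpa using hr.le)
  have hle : ∀ᶠ r in 𝓝[>] 0,
      μ ((S \ W) ∩ closedBall x r) / μ (closedBall x r) ≤ 1 - c := by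
    filter_upwards [h x hxSW.1] with r hr
    set B := closedBall x r
    rcases eq_or_ne (μ B) ∞ with hB | hB
    · simp [hB]
    refine ENNReal.div_le_of_le_mul ?_
    have hadd : μ ((S \ W) ∩ B) + μ (W ∩ B) ≤ μ B := by
      rw [← measure_union (Set.disjoint_left.2 fun y hy hy' => hy.1.2 hy'.1)
        (hW.inter measurableSet_closedBall)]
      exact measure_mono (Set.union_subset Set.inter_subset_right Set.inter_subset_right)
    rw [ENNReal.sub_mul fun _ _ => hB, one_mul]
    have hcB : c * μ B ≠ ∞ :=
      ne_top_of_le_ne_top hB (hr.trans (measure_mono Set.inter_subset_right))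
    exact ENNReal.le_sub_of_add_le_right hcB (le_trans (by gcongr) hadd)
  exact (ENNReal.sub_lt_self ENNReal.one_ne_top one_ne_zero hc).not_ge (le_of_tendsto hlim hle)

lemma MeasureTheory.measureReal_closedBall_pos {α : Type*} [PseudoMetricSpace α] [ProperSpace α]
    [MeasurableSpace α] (μ : Measure α) [μ.IsOpenPosMeasure] [IsFiniteMeasureOnCompacts μ]
    (x : α) {r : ℝ} (hr : 0 < r) : 0 < μ.real (closedBall x r) :=
  ENNReal.toReal_pos (measure_closedBall_pos μ x hr).ne' measure_closedBall_lt_top.ne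

section PadicBalls

variable {p}

lemma Padic.norm_le_iff_le_zpow_log {x : ℚ_[p]} {r : ℝ} (hr : 0 < r) :
    ‖x‖ ≤ r ↔ ‖x‖ ≤ (p : ℝ) ^ Int.log p r := by
  have hp : 1 < p := (Fact.out : p.Prime).one_lt
  rcases eq_or_ne x 0 with rfl | hx
  · simp only [norm_zero, hr.le, true_iff]; positivity
  rw [Padic.norm_eq_zpow_neg_valuation hx, Int.zpow_le_iff_le_log hp hr,
    zpow_le_zpow_iff_right₀ (by exact_mod_cast hp)]

lemma Padic.norm_lt_iff_le_zpow_clog_sub_one {x : ℚ_[p]} {r : ℝ} (hr : 0 < r) :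
    ‖x‖ < r ↔ ‖x‖ ≤ (p : ℝ) ^ (Int.clog p r - 1) := by
  have hp : 1 < p := (Fact.out : p.Prime).one_lt
  rw [← Padic.norm_lt_pow_iff_norm_le_pow_sub_one]
  rcases eq_or_ne x 0 with rfl | hx
  · simp only [norm_zero, hr, true_iff]; positivity
  rw [Padic.norm_eq_zpow_neg_valuation hx, Int.zpow_lt_iff_lt_clog hp hr,
    zpow_lt_zpow_iff_right₀ (by exact_mod_cast hp)]

lemma Padic.closedBall_eq_closedBall_zpow_log (x : ℚ_[p]) {r : ℝ} (hr : 0 < r) :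
    closedBall x r = closedBall x ((p : ℝ) ^ Int.log p r) := by
  ext y; simp only [mem_closedBall, dist_eq_norm, Padic.norm_le_iff_le_zpow_log hr]

lemma Padic.ball_eq_closedBall_zpow_clog (x : ℚ_[p]) {r : ℝ} (hr : 0 < r) :
    ball x r = closedBall x ((p : ℝ) ^ (Int.clog p r - 1)) := by
  ext y
  simp only [mem_ball, mem_closedBall, dist_eq_norm, Padic.norm_lt_iff_le_zpow_clog_sub_one hr]

lemma Padic.closedBall_zpow_eq_ball (x : ℚ_[p]) (m : ℤ) :
    closedBall x ((p : ℝ) ^ m) = ball x ((p : ℝ) ^ (m + 1)) := by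
  ext y
  simp only [mem_ball, mem_closedBall, dist_eq_norm, Padic.norm_le_pow_iff_norm_lt_pow_add_one]

lemma isPadicDisc_iff {K : Set ℚ_[p]} : IsPadicDisc p K ↔ ∃ a r, 0 < r ∧ K = ball a r := by
  simp only [IsPadicDisc, ball, dist_eq_norm]

lemma Padic.isPadicDisc_closedBall (x : ℚ_[p]) {r : ℝ} (hr : 0 < r) :
    IsPadicDisc p (closedBall x r) :=
  isPadicDisc_iff.2 ⟨x, (p : ℝ) ^ (Int.log p r + 1),
    zpow_pos (by exact_mod_cast (Fact.out : p.Prime).pos) _, by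
    rw [Padic.closedBall_eq_closedBall_zpow_log x hr, Padic.closedBall_zpow_eq_ball]⟩

lemma Padic.closedBall_zpow_add_one_eq_biUnion (m : ℤ) :
    closedBall (0 : ℚ_[p]) ((p : ℝ) ^ (m + 1)) =
      ⋃ j ∈ Finset.range p, closedBall ((j : ℚ_[p]) * (p : ℚ_[p]) ^ (-(m + 1))) ((p : ℝ) ^ m) := by
  have hp : (1 : ℝ) < p := by exact_mod_cast (Fact.out : p.Prime).one_lt
  set u : ℚ_[p] := (p : ℚ_[p]) ^ (-(m + 1))
  have hu : ‖u‖ = (p : ℝ) ^ (m + 1) := by rw [Padic.norm_p_zpow, neg_neg]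
  have hu0 : u ≠ 0 := norm_ne_zero_iff.1 (by rw [hu]; positivity)
  ext x
  simp only [mem_closedBall, dist_eq_norm, sub_zero, Set.mem_iUnion, Finset.mem_range,
    exists_prop]
  constructor
  · intro hx
    have hz : ‖x / u‖ ≤ 1 := by
      rw [norm_div, hu, div_le_one (by positivity)]; exact hx
    obtain ⟨z, hz'⟩ : ∃ z : ℤ_[p], (z : ℚ_[p]) = x / u := ⟨⟨x / u, hz⟩, rfl⟩
    obtain ⟨j, hj, hjz⟩ := PadicInt.exists_mem_range z
    rw [IsLocalRing.mem_maximalIdeal, PadicInt.mem_nonunits, PadicInt.norm_def,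
      PadicInt.coe_sub, PadicInt.coe_natCast, hz'] at hjz
    have hjz' : ‖x / u - j‖ ≤ (p : ℝ) ^ (-1 : ℤ) := by
      simpa using (Padic.norm_lt_pow_iff_norm_le_pow_sub_one (x / u - (j : ℚ_[p])) 0).1
        (by simpa using hjz)
    refine ⟨j, hj, ?_⟩
    have : x - j * u = (x / u - j) * u := by field_simp
    rw [this, norm_mul, hu]
    calc ‖x / u - j‖ * (p : ℝ) ^ (m + 1) ≤ (p : ℝ) ^ (-1 : ℤ) * (p : ℝ) ^ (m + 1) := by gcongr
      _ = (p : ℝ) ^ m := by rw [← zpow_add₀ (by positivity)]; ring_nf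
  · rintro ⟨j, -, hj⟩
    calc ‖x‖ = ‖(x - j * u) + j * u‖ := by ring_nf
      _ ≤ max ‖x - j * u‖ ‖(j : ℚ_[p]) * u‖ := IsUltrametricDist.norm_add_le_max _ _
      _ ≤ (p : ℝ) ^ (m + 1) := by
        refine max_le (hj.trans (zpow_le_zpow_right₀ hp.le (by omega))) ?_
        rw [norm_mul, hu]
        exact mul_le_of_le_one_left (by positivity)
          (IsUltrametricDist.norm_natCast_le_one ℚ_[p] j)

lemma Padic.pairwiseDisjoint_closedBall_natCast_mul_zpow (m : ℤ) :
    Set.PairwiseDisjoint (Finset.range p : Set ℕ)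
      fun j => closedBall ((j : ℚ_[p]) * (p : ℚ_[p]) ^ (-(m + 1))) ((p : ℝ) ^ m) := by
  have hp : (1 : ℝ) < p := by exact_mod_cast (Fact.out : p.Prime).one_lt
  set u : ℚ_[p] := (p : ℚ_[p]) ^ (-(m + 1))
  have hu : ‖u‖ = (p : ℝ) ^ (m + 1) := by rw [Padic.norm_p_zpow, neg_neg]
  intro i hi j hj hij
  simp only [Finset.coe_range, Set.mem_Iio] at hi hj
  refine Set.disjoint_left.2 fun x hxi hxj => ?_
  have hdvd : ¬ (p : ℤ) ∣ (i - j : ℤ) := fun h =>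
    hij (by have := Int.eq_zero_of_abs_lt_dvd h (by rw [abs_lt]; omega); omega)
  have hij1 : ‖((i - j : ℤ) : ℚ_[p])‖ = 1 :=
    le_antisymm (Padic.norm_int_le_one _) (not_lt.1 (mt Padic.norm_intCast_lt_one_iff.1 hdvd))
  have hle : ‖(i : ℚ_[p]) * u - j * u‖ ≤ (p : ℝ) ^ m := by
    rw [← dist_eq_norm]
    exact (IsUltrametricDist.dist_triangle_max _ x _).trans
      (max_le (by rwa [dist_comm]) hxj)
  rw [← sub_mul, show (i : ℚ_[p]) - j = ((i - j : ℤ) : ℚ_[p]) by push_cast; ring, norm_mul,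
    hij1, one_mul, hu] at hle
  exact absurd hle (not_le.2 (zpow_lt_zpow_right₀ hp (by omega)))

end PadicBalls

section HaarMeasure

variable {p} [MeasurableSpace ℚ_[p]] [BorelSpace ℚ_[p]] (μ : Measure ℚ_[p]) [μ.IsAddHaarMeasure]

lemma Padic.measure_closedBall_zpow_add_one (m : ℤ) :
    μ (closedBall (0 : ℚ_[p]) ((p : ℝ) ^ (m + 1))) = p * μ (closedBall 0 ((p : ℝ) ^ m)) := by
  rw [Padic.closedBall_zpow_add_one_eq_biUnion, measure_biUnion_finset
    (Padic.pairwiseDisjoint_closedBall_natCast_mul_zpow m) fun _ _ => measurableSet_closedBall]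
  simp [Measure.addHaar_closedBall_center μ]

lemma Padic.measureReal_closedBall_zpow (x : ℚ_[p]) (m : ℤ) :
    μ.real (closedBall x ((p : ℝ) ^ m)) = (p : ℝ) ^ m * μ.real (closedBall (0 : ℚ_[p]) 1) := by
  have hp : (p : ℝ) ≠ 0 := by exact_mod_cast (Fact.out : p.Prime).ne_zero
  have step (k : ℤ) : μ.real (closedBall (0 : ℚ_[p]) ((p : ℝ) ^ (k + 1))) =
      p * μ.real (closedBall (0 : ℚ_[p]) ((p : ℝ) ^ k)) := by
    simp [measureReal_def, Padic.measure_closedBall_zpow_add_one, ENNReal.toReal_mul]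
  rw [Measure.addHaar_real_closedBall_center]
  induction m using Int.induction_on with
  | zero => simp
  | succ k ih => rw [step, ih, zpow_add_one₀ hp]; ring
  | pred k ih =>
    refine mul_left_cancel₀ hp ?_
    rw [← step, sub_add_cancel, ih, zpow_sub_one₀ hp]
    field_simp

lemma Padic.measureReal_ball_le (x : ℚ_[p]) {r : ℝ} (hr : 0 < r) :
    μ.real (ball x r) ≤ r * μ.real (closedBall (0 : ℚ_[p]) 1) := by
  rw [Padic.ball_eq_closedBall_zpow_clog x hr, Padic.measureReal_closedBall_zpow]
  gcongr
  exact (Int.zpow_pred_clog_lt_self (Fact.out : p.Prime).one_lt hr).le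

lemma Padic.le_measureReal_ball (x : ℚ_[p]) {r : ℝ} (hr : 0 < r) :
    r / p * μ.real (closedBall (0 : ℚ_[p]) 1) ≤ μ.real (ball x r) := by
  have hp : (0 : ℝ) < p := by exact_mod_cast (Fact.out : p.Prime).pos
  rw [Padic.ball_eq_closedBall_zpow_clog x hr, Padic.measureReal_closedBall_zpow]
  gcongr
  rw [zpow_sub_one₀ hp.ne', div_eq_mul_inv]
  gcongr
  exact Int.self_le_zpow_clog (Fact.out : p.Prime).one_lt r

lemma Padic.measureReal_closedBall_le (x : ℚ_[p]) {r : ℝ} (hr : 0 < r) :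
    μ.real (closedBall x r) ≤ r * μ.real (closedBall (0 : ℚ_[p]) 1) := by
  rw [Padic.closedBall_eq_closedBall_zpow_log x hr, Padic.measureReal_closedBall_zpow]
  gcongr
  exact Int.zpow_log_le_self (Fact.out : p.Prime).one_lt hr

lemma Padic.le_measureReal_closedBall (x : ℚ_[p]) {r : ℝ} (hr : 0 < r) :
    r / p * μ.real (closedBall (0 : ℚ_[p]) 1) ≤ μ.real (closedBall x r) :=
  (Padic.le_measureReal_ball μ x hr).trans
    (measureReal_mono ball_subset_closedBall measure_closedBall_lt_top.ne)

instance Padic.isUnifLocDoublingMeasure : IsUnifLocDoublingMeasure μ := by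
  have hp : (0 : ℝ) < p := by exact_mod_cast (Fact.out : p.Prime).pos
  refine ⟨⟨2 * p, eventually_nhdsWithin_of_forall fun ε (hε : 0 < ε) x => ?_⟩⟩
  rw [← ofReal_measureReal measure_closedBall_lt_top.ne,
    ← ofReal_measureReal (μ := μ) (s := closedBall x ε) measure_closedBall_lt_top.ne,
    show ((2 * p : NNReal) : ENNReal) = ENNReal.ofReal (2 * p) by simp,
    ← ENNReal.ofReal_mul (by positivity)]
  refine ENNReal.ofReal_le_ofReal ?_
  calc μ.real (closedBall x (2 * ε)) ≤ 2 * ε * μ.real (closedBall (0 : ℚ_[p]) 1) :=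
        Padic.measureReal_closedBall_le μ x (by positivity)
    _ = 2 * p * (ε / p * μ.real (closedBall (0 : ℚ_[p]) 1)) := by field_simp
    _ ≤ 2 * p * μ.real (closedBall x ε) := by gcongr; exact Padic.le_measureReal_closedBall μ x hε

lemma Padic.card_mul_le_measureReal_biUnion_ball {P : Finset ℚ_[p]} {δ ρ : ℝ}
    (hP : (P : Set ℚ_[p]).Pairwise fun x y => δ ≤ dist x y) (hρ : 0 < ρ) (hρδ : ρ ≤ δ) :
    #P * (ρ / p * μ.real (closedBall (0 : ℚ_[p]) 1)) ≤ μ.real (⋃ x ∈ P, ball x ρ) := by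
  rw [measureReal_biUnion_finset
    (IsUltrametricDist.pairwiseDisjoint_ball_of_pairwise_le_dist hP hρδ)
    (fun _ _ => measurableSet_ball), ← nsmul_eq_mul]
  exact Finset.card_nsmul_le_sum _ _ _ fun x _ => Padic.le_measureReal_ball μ x hρ

end HaarMeasure

section FinitePointSets

variable {p}

lemma Padic.card_mul_le_of_pairwise_le_dist {P : Finset ℚ_[p]} {a : ℚ_[p]} {R δ : ℝ}
    (hδ : 0 < δ) (hPa : ∀ x ∈ P, x ∈ ball a R)
    (hP : (P : Set ℚ_[p]).Pairwise fun x y => δ ≤ dist x y) :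
    #P * δ ≤ p * max R δ := by
  borelize ℚ_[p]
  set μ : Measure ℚ_[p] := Measure.addHaar
  have hp : (0 : ℝ) < p := by exact_mod_cast (Fact.out : p.Prime).pos
  have hV : 0 < μ.real (closedBall (0 : ℚ_[p]) 1) :=
    measureReal_closedBall_pos μ 0 one_pos
  have hsub : (⋃ x ∈ P, ball x δ) ⊆ ball a (max R δ) :=
    IsUltrametricDist.biUnion_ball_subset_ball
      (fun x hx => ball_subset_ball (le_max_left R δ) (hPa x hx)) (le_max_right R δ)
  have key : #P * (δ / p * μ.real (closedBall (0 : ℚ_[p]) 1)) ≤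
      max R δ * μ.real (closedBall (0 : ℚ_[p]) 1) :=
    (Padic.card_mul_le_measureReal_biUnion_ball μ hP hδ le_rfl).trans <|
      (measureReal_mono hsub).trans (Padic.measureReal_ball_le μ a (hδ.trans_le (le_max_right _ _)))
  calc (#P : ℝ) * δ = #P * (δ / p * μ.real (closedBall (0 : ℚ_[p]) 1)) *
        (p / μ.real (closedBall (0 : ℚ_[p]) 1)) := by field_simp
    _ ≤ max R δ * μ.real (closedBall (0 : ℚ_[p]) 1) * (p / μ.real (closedBall (0 : ℚ_[p]) 1)) := by
        gcongr
    _ = p * max R δ := by field_simp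

lemma IsRegularSystem.exists_finset [MeasurableSpace ℚ_[p]] {μ : Measure ℚ_[p]}
    {K₀ Γ : Set ℚ_[p]} {N : ℚ_[p] → ℝ} (hreg : IsRegularSystem p μ K₀ Γ N) :
    ∃ C > 0, ∀ K ⊆ K₀, IsPadicDisc p K → ∃ T₀, ∀ T, T₀ ≤ T → 0 < T →
      ∃ P : Finset ℚ_[p], (P : Set ℚ_[p]) ⊆ Γ ∩ K ∧ (∀ x ∈ P, N x ≤ T) ∧
        (P : Set ℚ_[p]).Pairwise (fun x y => T⁻¹ ≤ dist x y) ∧ C * T * μ.real K ≤ #P := by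
  classical
  obtain ⟨C, hC, hreg⟩ := hreg
  refine ⟨C, hC, fun K hK hKd => ?_⟩
  obtain ⟨T₀, hT₀⟩ := hreg K hK hKd
  refine ⟨T₀, fun T hT hTpos => ?_⟩
  obtain ⟨t, γ, hγ, hN, hsep, hcount⟩ := hT₀ T hT
  have hinj : Function.Injective γ := fun i j hij => by
    by_contra hne
    have := hsep i j hne
    rw [hij, sub_self, norm_zero] at this
    exact (inv_pos.2 hTpos).not_ge this
  refine ⟨Finset.univ.image γ, ?_, ?_, ?_, ?_⟩
  · simpa [Set.subset_def] using hγ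
  · simpa using hN
  · simp only [Finset.coe_image, Finset.coe_univ, Set.image_univ]
    rintro _ ⟨i, rfl⟩ _ ⟨j, rfl⟩ hij
    exact (dist_eq_norm (γ i) (γ j)).symm ▸ hsep i j (ne_of_apply_ne γ hij)
  · rwa [Finset.card_image_of_injective _ hinj, Finset.card_univ, Fintype.card_fin]

end FinitePointSets

section Ubiquity

variable {p} [MeasurableSpace ℚ_[p]] [BorelSpace ℚ_[p]] (μ : Measure ℚ_[p]) [μ.IsAddHaarMeasure]

lemma Padic.measureReal_biUnion_ball_inter_mul_le {P Q : Finset ℚ_[p]} {ρ ρ' δ : ℝ}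
    (hρ' : 0 < ρ') (hρ'ρ : ρ' ≤ ρ) (hδ : 0 < δ)
    (hQ : (Q : Set ℚ_[p]).Pairwise fun x y => δ ≤ dist x y) :
    μ.real ((⋃ x ∈ P, ball x ρ) ∩ ⋃ y ∈ Q, ball y ρ') * δ ≤
      #P * (p * max ρ δ) * (ρ' * μ.real (closedBall (0 : ℚ_[p]) 1)) := by
  classical
  set V := μ.real (closedBall (0 : ℚ_[p]) 1)
  have hcover : (⋃ x ∈ P, ball x ρ) ∩ (⋃ y ∈ Q, ball y ρ') ⊆
      ⋃ x ∈ P, ⋃ y ∈ Q.filter (· ∈ ball x ρ), ball y ρ' := by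
    rintro z ⟨hz, hz'⟩
    simp only [Set.mem_iUnion, exists_prop, Finset.mem_filter] at hz hz' ⊢
    obtain ⟨x, hx, hzx⟩ := hz
    obtain ⟨y, hy, hzy⟩ := hz'
    refine ⟨x, hx, y, ⟨hy, ?_⟩, hzy⟩
    rw [mem_ball] at hzx hzy ⊢
    exact (IsUltrametricDist.dist_triangle_max y z x).trans_lt
      (max_lt (by rw [dist_comm]; exact hzy.trans_le hρ'ρ) hzx)
  have hcard (x : ℚ_[p]) : #(Q.filter (· ∈ ball x ρ)) * δ ≤ p * max ρ δ :=
    Padic.card_mul_le_of_pairwise_le_dist hδ (fun y hy => (Finset.mem_filter.1 hy).2)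
      (hQ.mono (Finset.coe_subset.2 (Finset.filter_subset _ _)))
  calc μ.real ((⋃ x ∈ P, ball x ρ) ∩ ⋃ y ∈ Q, ball y ρ') * δ
      ≤ (∑ x ∈ P, ∑ y ∈ Q.filter (· ∈ ball x ρ), μ.real (ball y ρ')) * δ := by
        gcongr
        refine (measureReal_mono hcover ?_).trans ((measureReal_biUnion_finset_le _ _).trans
          (Finset.sum_le_sum fun x _ => measureReal_biUnion_finset_le _ _))
        exact (measure_biUnion_lt_top P.finite_toSet fun x _ =>
          measure_biUnion_lt_top (Finset.finite_toSet _) fun y _ => measure_ball_lt_top).ne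
      _ ≤ (∑ x ∈ P, #(Q.filter (· ∈ ball x ρ)) * (ρ' * V)) * δ := by
        gcongr with x
        rw [← nsmul_eq_mul]
        exact Finset.sum_le_card_nsmul _ _ _ fun y _ => Padic.measureReal_ball_le μ y hρ'
      _ = ∑ x ∈ P, #(Q.filter (· ∈ ball x ρ)) * δ * (ρ' * V) := by
        rw [Finset.sum_mul]; congr! 1 with x; ring
      _ ≤ ∑ x ∈ P, p * max ρ δ * (ρ' * V) :=
          Finset.sum_le_sum fun x _ => mul_le_mul_of_nonneg_right (hcard x)
            (mul_nonneg hρ'.le measureReal_nonneg)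
      _ = #P * (p * max ρ δ) * (ρ' * V) := by rw [Finset.sum_const, nsmul_eq_mul]; ring

lemma Padic.measureReal_biUnion_ball_inter_le {P Q : Finset ℚ_[p]} {a : ℚ_[p]}
    {r T T' ρ ρ' : ℝ} (hr : 0 < r) (hT : r⁻¹ ≤ T) (hT' : 0 < T') (hρ' : 0 < ρ') (hρ'ρ : ρ' ≤ ρ)
    (hPa : ∀ x ∈ P, x ∈ ball a r) (hP : (P : Set ℚ_[p]).Pairwise fun x y => T⁻¹ ≤ dist x y)
    (hQ : (Q : Set ℚ_[p]).Pairwise fun x y => T'⁻¹ ≤ dist x y) :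
    μ.real ((⋃ x ∈ P, ball x ρ) ∩ ⋃ y ∈ Q, ball y ρ') ≤
      p ^ 3 * μ.real (ball a r) * (T * ρ * (T' * ρ') + T * ρ') := by
  set V := μ.real (closedBall (0 : ℚ_[p]) 1)
  have hp : (0 : ℝ) < p := by exact_mod_cast (Fact.out : p.Prime).pos
  have hV : 0 < V := measureReal_closedBall_pos μ 0 one_pos
  have hT0 : 0 < T := (inv_pos.2 hr).trans_le hT
  have hρ : 0 < ρ := hρ'.trans_le hρ'ρ
  have hrV : r * V ≤ p * μ.real (ball a r) := by
    have := Padic.le_measureReal_ball μ a hr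
    rw [div_mul_eq_mul_div, div_le_iff₀ hp] at this
    linarith
  have hcard : (#P : ℝ) ≤ p * r * T := by
    have := Padic.card_mul_le_of_pairwise_le_dist (inv_pos.2 hT0) hPa hP
    rw [max_eq_left (inv_le_of_inv_le₀ hr hT), ← div_eq_mul_inv, div_le_iff₀ hT0] at this
    linarith
  have hmax : max ρ T'⁻¹ ≤ ρ + T'⁻¹ := max_le_add_of_nonneg hρ.le (inv_pos.2 hT').le
  calc μ.real ((⋃ x ∈ P, ball x ρ) ∩ ⋃ y ∈ Q, ball y ρ')
      = μ.real ((⋃ x ∈ P, ball x ρ) ∩ ⋃ y ∈ Q, ball y ρ') * T'⁻¹ * T' := by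
        field_simp
    _ ≤ #P * (p * max ρ T'⁻¹) * (ρ' * V) * T' :=
        mul_le_mul_of_nonneg_right
          (Padic.measureReal_biUnion_ball_inter_mul_le μ hρ' hρ'ρ (inv_pos.2 hT') hQ) hT'.le
    _ ≤ p * r * T * (p * (ρ + T'⁻¹)) * (ρ' * V) * T' := by
        refine mul_le_mul_of_nonneg_right (mul_le_mul_of_nonneg_right (mul_le_mul hcard
          (mul_le_mul_of_nonneg_left hmax hp.le) ?_ (by positivity)) (by positivity)) hT'.le
        exact mul_nonneg hp.le (hρ.le.trans (le_max_left _ _))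
    _ = p ^ 2 * (r * V) * (T * ρ') * (T' * ρ + 1) := by field_simp
    _ ≤ p ^ 2 * (p * μ.real (ball a r)) * (T * ρ') * (T' * ρ + 1) := by gcongr
    _ = p ^ 3 * μ.real (ball a r) * (T * ρ * (T' * ρ') + T * ρ') := by ring

theorem Padic.ofReal_le_measure_limsup_biUnion_ball {a : ℚ_[p]} {r C : ℝ} (hr : 0 < r)
    (hC : 0 < C) {T ρ : ℕ → ℝ} (hT : ∀ n, r⁻¹ ≤ T n)
    (hTsum : ∀ l, ∑ k ∈ Finset.range (l + 1), T k ≤ 2 * T l) (hρ : ∀ n, 0 < ρ n)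
    (hρT : ∀ n, ρ n ≤ (T n)⁻¹) (hρanti : Antitone ρ) (hdiv : ¬ Summable fun n => T n * ρ n)
    {P : ℕ → Finset ℚ_[p]} (hPa : ∀ n, ∀ x ∈ P n, x ∈ ball a r)
    (hPsep : ∀ n, (P n : Set ℚ_[p]).Pairwise fun x y => (T n)⁻¹ ≤ dist x y)
    (hPcard : ∀ n, C * T n * μ.real (ball a r) ≤ #(P n)) :
    ENNReal.ofReal ((C * μ.real (closedBall (0 : ℚ_[p]) 1) / p) ^ 2 / (8 * p ^ 3) *
      μ.real (ball a r)) ≤ μ (limsup (fun n => ⋃ x ∈ P n, ball x (ρ n)) atTop) := by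
  set V := μ.real (closedBall (0 : ℚ_[p]) 1)
  set μI := μ.real (ball a r)
  set A : ℕ → Set ℚ_[p] := fun n => ⋃ x ∈ P n, ball x (ρ n)
  have hp : (0 : ℝ) < p := by exact_mod_cast (Fact.out : p.Prime).pos
  have hV : 0 < V := measureReal_closedBall_pos μ 0 one_pos
  have hI : 0 < μI := ENNReal.toReal_pos (measure_ball_pos μ a hr).ne' measure_ball_lt_top.ne
  have hTpos (n : ℕ) : 0 < T n := (inv_pos.2 hr).trans_le (hT n)
  have hAI (n : ℕ) : A n ⊆ ball a r := IsUltrametricDist.biUnion_ball_subset_ball (hPa n)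
    ((hρT n).trans (inv_le_of_inv_le₀ hr (hT n)))
  have hlow (n : ℕ) : C * V / p * μI * (T n * ρ n) ≤ μ.real (A n) :=
    calc C * V / p * μI * (T n * ρ n) = C * T n * μI * (ρ n / p * V) := by ring
      _ ≤ #(P n) * (ρ n / p * V) :=
        mul_le_mul_of_nonneg_right (hPcard n) (mul_nonneg (div_nonneg (hρ n).le hp.le) hV.le)
      _ ≤ μ.real (A n) :=
        Padic.card_mul_le_measureReal_biUnion_ball μ (hPsep n) (hρ n) (hρT n)
  have hpair := sum_sum_measureReal_inter_le μ (fun n => (hTpos n).le) (fun n => (hρ n).le)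
    hTsum (by positivity) fun k l hkl => Padic.measureReal_biUnion_ball_inter_le μ hr (hT k)
      (hTpos l) (hρ l) (hρanti hkl) (hPa k) (hPsep k) (hPsep l)
  have hfin : μ (⋃ n, A n) ≠ ⊤ :=
    measure_ne_top_of_subset (Set.iUnion_subset hAI) measure_ball_lt_top.ne
  have hconst : (C * V / p * μI) ^ 2 / (2 * (4 * (p ^ 3 * μI))) =
      (C * V / p) ^ 2 / (8 * p ^ 3) * μI := by
    field_simp
    ring
  rw [← hconst]
  exact ofReal_le_measure_limsup_of_sum_measureReal_inter_le μ
    (fun n => .biUnion (Finset.countable_toSet _) fun _ _ => measurableSet_ball) hfin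
    (fun n => mul_nonneg (hTpos n).le (hρ n).le) hdiv (by positivity) (by positivity) hlow hpair

theorem IsRegularSystem.exists_ofReal_mul_le_measure_inter {K₀ Γ : Set ℚ_[p]}
    {N : ℚ_[p] → ℝ} (hreg : IsRegularSystem p μ K₀ Γ N) (hΓ : Γ.Countable)
    (hN : ∀ γ ∈ Γ, 0 < N γ) {Ψ : ℝ → ℝ} (hΨpos : ∀ x, 0 < x → 0 < Ψ x)
    (hΨmono : AntitoneOn Ψ (Set.Ioi 0)) (hdiv : ¬ Summable fun h : ℕ => Ψ (h + 1)) :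
    ∃ c : ℝ, 0 < c ∧ ∀ I ⊆ K₀, IsPadicDisc p I →
      ENNReal.ofReal c * μ I ≤ μ ({ω | {γ ∈ Γ | ‖ω - γ‖ < Ψ (N γ)}.Infinite} ∩ I) := by
  obtain ⟨C, hC, hsel⟩ := hreg.exists_finset
  have hp : (0 : ℝ) < p := by exact_mod_cast (Fact.out : p.Prime).pos
  set V := μ.real (closedBall (0 : ℚ_[p]) 1)
  have hV : 0 < V := measureReal_closedBall_pos μ 0 one_pos
  refine ⟨(C * V / p) ^ 2 / (8 * p ^ 3), by positivity, fun I hIK hI => ?_⟩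
  obtain ⟨T₀, hT₀⟩ := hsel I hIK hI
  obtain ⟨a, r, hr, rfl⟩ := isPadicDisc_iff.1 hI
  obtain ⟨s, hs⟩ : ∃ s : ℕ, max T₀ r⁻¹ ≤ 2 ^ s :=
    (pow_unbounded_of_one_lt _ one_lt_two).imp fun _ => le_of_lt
  set T : ℕ → ℝ := fun n => 2 ^ (n + s)
  have hTpos (n : ℕ) : 0 < T n := by positivity
  have hTmono : Monotone T := fun k l hkl => pow_le_pow_right₀ one_le_two (by omega)
  have hT (n : ℕ) : max T₀ r⁻¹ ≤ T n := hs.trans (pow_le_pow_right₀ one_le_two (by omega))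
  choose P hPΓ hPN hPsep hPcard using fun n =>
    hT₀ (T n) ((le_max_left _ _).trans (hT n)) (hTpos n)
  set ρ : ℕ → ℝ := fun n => min (Ψ (T n)) (T n)⁻¹
  have hρ (n : ℕ) : 0 < ρ n := lt_min (hΨpos _ (hTpos n)) (inv_pos.2 (hTpos n))
  have hρr (n : ℕ) : ρ n ≤ r :=
    (min_le_right _ _).trans (inv_le_of_inv_le₀ hr ((le_max_right _ _).trans (hT n)))
  have hρanti : Antitone ρ := fun k l hkl =>
    min_le_min (hΨmono (hTpos k) (hTpos l) (hTmono hkl)) (inv_anti₀ (hTpos k) (hTmono hkl))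
  have hρlim : Tendsto ρ atTop (𝓝 0) :=
    squeeze_zero (fun n => (hρ n).le) (fun n => min_le_right _ _) <|
      tendsto_inv_atTop_zero.comp <|
        (tendsto_pow_atTop_atTop_of_one_lt one_lt_two).comp (tendsto_add_atTop_nat s)
  have hlim := Padic.ofReal_le_measure_limsup_biUnion_ball μ hr hC
    (fun n => (le_max_right _ _).trans (hT n)) (sum_range_two_pow_add_le s) hρ
    (fun n => min_le_right _ _) hρanti
    (not_summable_two_pow_add_mul_min_inv (fun x hx => (hΨpos x hx).le) hΨmono hdiv s)
    (fun n x hx => (hPΓ n hx).2) hPsep hPcard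
  set A : ℕ → Set ℚ_[p] := fun n => ⋃ x ∈ P n, ball x (ρ n)
  have hsub : limsup A atTop \ Γ ⊆ {ω | {γ ∈ Γ | ‖ω - γ‖ < Ψ (N γ)}.Infinite} ∩ ball a r :=
    fun x hx => ⟨limsup_biUnion_ball_sdiff_subset_setOf_infinite hN hΨmono hTpos
      (fun n => min_le_left _ _) hρlim (fun n x hx => (hPΓ n hx).1) hPN hx,
    limsup_le_iSup.trans (Set.iUnion_subset fun n => IsUltrametricDist.biUnion_ball_subset_ball
      (fun x hx => (hPΓ n hx).2) (hρr n)) hx.1⟩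
  calc ENNReal.ofReal ((C * V / p) ^ 2 / (8 * p ^ 3)) * μ (ball a r)
      = ENNReal.ofReal ((C * V / p) ^ 2 / (8 * p ^ 3) * μ.real (ball a r)) := by
        rw [ENNReal.ofReal_mul (by positivity), ofReal_measureReal]
    _ ≤ μ (limsup A atTop) := hlim
    _ = μ (limsup A atTop \ Γ) := (measure_sdiff_null (hΓ.measure_zero μ)).symm
    _ ≤ μ ({ω | {γ ∈ Γ | ‖ω - γ‖ < Ψ (N γ)}.Infinite} ∩ ball a r) := measure_mono hsub

end Ubiquity

theorem stmt_19 [MeasurableSpace ℚ_[p]] [BorelSpace ℚ_[p]]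
    (μ : Measure ℚ_[p]) [μ.IsAddHaarMeasure]
    (K₀ : Set ℚ_[p]) (hK₀ : IsPadicDisc p K₀)
    (Γ : Set ℚ_[p]) (hΓ : Γ.Countable) (N : ℚ_[p] → ℝ) (hN : ∀ γ ∈ Γ, 0 < N γ)
    (hreg : IsRegularSystem p μ K₀ Γ N)
    (Ψ : ℝ → ℝ) (hΨpos : ∀ x : ℝ, 0 < x → 0 < Ψ x)
    (hΨmono : ∀ x y : ℝ, 0 < x → x ≤ y → Ψ y ≤ Ψ x)
    (hdiv : ¬ Summable (fun h : ℕ => Ψ (h + 1))) :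
    μ (K₀ \ {ω ∈ K₀ | {γ ∈ Γ | ‖ω - γ‖ < Ψ (N γ)}.Infinite}) = 0 := by
  obtain ⟨c, hc, hloc⟩ := hreg.exists_ofReal_mul_le_measure_inter μ hΓ hN hΨpos
    (fun x hx y _ hxy => hΨmono x y hx hxy) hdiv
  obtain ⟨a, r, hr, rfl⟩ := isPadicDisc_iff.1 hK₀
  have hW : MeasurableSet {ω | {γ ∈ Γ | ‖ω - γ‖ < Ψ (N γ)}.Infinite} := by
    simpa only [mem_ball_iff_norm] using
      measurableSet_setOf_infinite_sep hΓ fun γ _ => measurableSet_ball (x := γ) (ε := Ψ (N γ))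
  rw [← IsUnifLocDoublingMeasure.measure_diff_eq_zero_of_le_measure_inter_closedBall μ
    (S := ball a r) hW (ENNReal.ofReal_pos.2 hc).ne' fun x hx => ?_]
  · congr 1
    ext ω
    exact ⟨fun ⟨h1, h2⟩ => ⟨h1, fun h => h2 ⟨h1, h⟩⟩, fun ⟨h1, h2⟩ => ⟨h1, fun h => h2 h.2⟩⟩
  · filter_upwards [Ioo_mem_nhdsGT hr] with ρ hρ
    refine hloc _ ?_ (Padic.isPadicDisc_closedBall x hρ.1)
    rw [IsUltrametricDist.ball_eq_of_mem hx]
    exact closedBall_subset_ball hρ.2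
end
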